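/- Let G=(V,E,w) be an edge-weighted graph with E≠∅ and let d be a positive real with d ≥ w_max. If the density of the whole graph satisfies d(V) ≥ d, then there exists a subset S ⊆ V such that the induced subgraph G[S] is (⌊⌊d/w_max⌋/2⌋ + 1)-vertex-connected and every vertex of G[S] has weighted degree strictly greater than w_min·⌊d/w_max⌋ in G[S]. -/

import Mathlib

open Finset
open scoped Classical

noncomputable section

variable {V : Type*} [Fintype V] [DecidableEq V]

/-- The set of edges of `G` with both endpoints in `S`, i.e. the edge set `E(S)`
of the induced subgraph `G[S]`. -/
def edgesIn (G : SimpleGraph V) (S : Finset V) : Finset (Sym2 V) :=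
  Finset.univ.filter (fun e => e ∈ G.edgeSet ∧ ∀ v ∈ e, v ∈ S)

/-- `w(S)`: the total weight of the edges of the induced subgraph `G[S]`. -/
def wsum (G : SimpleGraph V) (w : Sym2 V → ℝ) (S : Finset V) : ℝ :=
  ∑ e ∈ edgesIn G S, w e

/-- The density `d(S) = w(S)/|S|` of the induced subgraph `G[S]`. -/
def density (G : SimpleGraph V) (w : Sym2 V → ℝ) (S : Finset V) : ℝ :=
  wsum G w S / S.card

/-- The weighted degree of a vertex `v` in the induced subgraph `G[S]`. -/
def wdeg (G : SimpleGraph V) (w : Sym2 V → ℝ) (S : Finset V) (v : V) : ℝ :=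
  ∑ e ∈ (edgesIn G S).filter (fun e => v ∈ e), w e

/-- `G[S]` is `k`-vertex-connected: it has at least `k+1` vertices, and deleting any set
of fewer than `k` vertices leaves a connected graph. -/
def VertexConnected (G : SimpleGraph V) (S : Finset V) (k : ℕ) : Prop :=
  k + 1 ≤ S.card ∧ ∀ D : Finset V, D ⊆ S → D.card < k →
    (G.induce ((S \ D : Finset V) : Set V)).Connected

/-- The edge-weighted graph `G[S]` is `k`-edge-connected: it is connected, and every set `F`
of its edges whose removal disconnects it has total weight at least `k`. -/
def EdgeConnected (G : SimpleGraph V) (w : Sym2 V → ℝ) (S : Finset V) (k : ℝ) : Prop :=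
  (G.induce (S : Set V)).Connected ∧
  ∀ F : Finset (Sym2 V), F ⊆ edgesIn G S →
    ¬ ((G.deleteEdges (F : Set (Sym2 V))).induce (S : Set V)).Connected →
    k ≤ ∑ e ∈ F, w e

/-!
Mader's extremal argument, with weights. Let `k = ⌊d / w_max⌋`, `c = ⌊k/2⌋ + 1/2`, and call
`A ⊆ V` heavy if `|A| ≥ k + 1` and `w(A) > d (|A| - c)`; the density hypothesis makes `V` heavy.
Take `S` heavy and minimal under inclusion. A heavy set on `k + 1` vertices would weigh at most
`w_max k (k + 1) / 2 ≤ d (k + 1 - c)`, so `|S| ≥ k + 2`; then `S - v` is not heavy for `v ∈ S`,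
which forces the weighted degree of `v` in `G[S]` to exceed `d ≥ w_min k`, so `v` also has more
than `k` neighbours in `S`. If deleting `D ⊆ S` disconnects `G[S]`, then `S = A ∪ B` with
`A ∩ B = D` and no edge between `A \ D` and `B \ D`. Each of `A`, `B` contains a vertex together
with all its neighbours, so both are proper subsets of `S` with more than `k` vertices, hence not
heavy, and `d (|S| - c) < w(S) ≤ w(A) + w(B) ≤ d (|S| + |D| - 2c)` gives `|D| > c`, that is,
`|D| ≥ ⌊k/2⌋ + 1`.
-/

section WeightedInducedSubgraph

variable {G : SimpleGraph V} {w : Sym2 V → ℝ} {S A B : Finset V} {v : V} {M : ℝ}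

lemma mem_edgesIn {e : Sym2 V} : e ∈ edgesIn G S ↔ e ∈ G.edgeSet ∧ ∀ v ∈ e, v ∈ S := by
  simp [edgesIn]

lemma edgesIn_erase : edgesIn G (S.erase v) = (edgesIn G S).filter (v ∉ ·) := by
  ext e
  simp only [mem_edgesIn, mem_filter, mem_erase]
  exact ⟨fun ⟨he, h⟩ => ⟨⟨he, fun u hu => (h u hu).2⟩, fun hv => (h v hv).1 rfl⟩,
    fun ⟨⟨he, h⟩, hv⟩ => ⟨he, fun u hu => ⟨fun huv => hv (huv ▸ hu), h u hu⟩⟩⟩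

lemma wsum_eq_wsum_erase_add_wdeg (S : Finset V) (v : V) :
    wsum G w S = wsum G w (S.erase v) + wdeg G w S v := by
  rw [wsum, wsum, wdeg, edgesIn_erase, add_comm, sum_filter_add_sum_filter_not]

lemma filter_mem_edgesIn_eq_image (hv : v ∈ S) :
    (edgesIn G S).filter (v ∈ ·) = (S.filter (G.Adj v)).image (s(v, ·)) := by
  ext e
  induction e using Sym2.ind with
  | _ a b =>
    simp only [mem_filter, mem_edgesIn, SimpleGraph.mem_edgeSet, Sym2.mem_iff, forall_eq_or_imp,
      forall_eq, mem_image, Sym2.eq_iff]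
    constructor
    · rintro ⟨⟨hab, ha, hb⟩, rfl | rfl⟩
      · exact ⟨b, ⟨hb, hab⟩, Or.inl ⟨rfl, rfl⟩⟩
      · exact ⟨a, ⟨ha, hab.symm⟩, Or.inr ⟨rfl, rfl⟩⟩
    · rintro ⟨u, ⟨hu, hvu⟩, ⟨rfl, rfl⟩ | ⟨rfl, rfl⟩⟩
      · exact ⟨⟨hvu, hv, hu⟩, Or.inl rfl⟩
      · exact ⟨⟨hvu.symm, hu, hv⟩, Or.inr rfl⟩

lemma wdeg_eq_sum_adj (hv : v ∈ S) :
    wdeg G w S v = ∑ u ∈ S.filter (G.Adj v), w s(v, u) := by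
  rw [wdeg, filter_mem_edgesIn_eq_image hv, sum_image]
  exact fun _ _ _ _ h => Sym2.congr_right.1 h

lemma wdeg_le_mul_card (hM : ∀ e ∈ G.edgeSet, w e ≤ M) (hv : v ∈ S) :
    wdeg G w S v ≤ M * #(S.filter (G.Adj v)) := by
  rw [wdeg_eq_sum_adj hv, mul_comm, ← nsmul_eq_mul]
  exact sum_le_card_nsmul _ _ _ fun u hu => hM _ (mem_filter.1 hu).2

lemma two_mul_wsum_le (hM0 : 0 ≤ M) (hM : ∀ e ∈ G.edgeSet, w e ≤ M) (S : Finset V) :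
    2 * wsum G w S ≤ M * (#S * (#S - 1)) := by
  induction S using Finset.induction_on with
  | empty =>
    have : edgesIn G ∅ = ∅ := eq_empty_of_forall_notMem fun e he => by
      induction e using Sym2.ind with
      | _ a b => exact notMem_empty a ((mem_edgesIn.1 he).2 a (Sym2.mem_mk_left a b))
    simp [wsum, this]
  | insert a s ha ih =>
    have hadj : (insert a s).filter (G.Adj a) ⊆ s := fun u hu => by
      obtain ⟨rfl | hu, hau⟩ := by simpa only [mem_filter, mem_insert] using hu
      exacts [(G.irrefl hau).elim, hu]
    have hdeg : wdeg G w (insert a s) a ≤ M * #s :=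
      (wdeg_le_mul_card hM (mem_insert_self a s)).trans
        (mul_le_mul_of_nonneg_left (by exact_mod_cast card_le_card hadj) hM0)
    rw [wsum_eq_wsum_erase_add_wdeg _ a, erase_insert ha, card_insert_of_notMem ha]
    push_cast
    linarith

lemma wsum_union_le (hw : ∀ e ∈ G.edgeSet, 0 ≤ w e)
    (hAB : ∀ x ∈ A, ∀ y ∈ B, G.Adj x y → x ∈ B ∨ y ∈ A) :
    wsum G w (A ∪ B) ≤ wsum G w A + wsum G w B := by
  have hsub : edgesIn G (A ∪ B) ⊆ edgesIn G A ∪ edgesIn G B := by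
    intro e he
    induction e using Sym2.ind with
    | _ p q =>
      simp only [mem_union, mem_edgesIn, SimpleGraph.mem_edgeSet, Sym2.forall_mem_pair] at he ⊢
      obtain ⟨hpq, hp | hp, hq | hq⟩ := he
      · exact Or.inl ⟨hpq, hp, hq⟩
      · rcases hAB p hp q hq hpq with h | h
        exacts [Or.inr ⟨hpq, h, hq⟩, Or.inl ⟨hpq, hp, h⟩]
      · rcases hAB q hq p hp hpq.symm with h | h
        exacts [Or.inr ⟨hpq, hp, h⟩, Or.inl ⟨hpq, h, hq⟩]
      · exact Or.inr ⟨hpq, hp, hq⟩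
  have hw' : ∀ e ∈ edgesIn G A ∪ edgesIn G B, 0 ≤ w e := fun e he => by
    rcases mem_union.1 he with he | he <;> exact hw e (mem_edgesIn.1 he).1
  calc wsum G w (A ∪ B) ≤ ∑ e ∈ edgesIn G A ∪ edgesIn G B, w e :=
        sum_le_sum_of_subset_of_nonneg hsub fun e he _ => hw' e he
    _ ≤ ∑ e ∈ edgesIn G A ∪ edgesIn G B, w e + ∑ e ∈ edgesIn G A ∩ edgesIn G B, w e :=
        le_add_of_nonneg_right <| sum_nonneg fun e he =>
          hw' e (mem_union_left _ (mem_of_mem_inter_left he))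
    _ = wsum G w A + wsum G w B := sum_union_inter

end WeightedInducedSubgraph

lemma SimpleGraph.exists_adj_closed_of_not_connected_induce {α : Type*} [DecidableEq α]
    {H : SimpleGraph α} {T : Finset α} (hT : T.Nonempty)
    (h : ¬ (H.induce (T : Set α)).Connected) :
    ∃ X ⊆ T, X.Nonempty ∧ (T \ X).Nonempty ∧ ∀ x ∈ X, ∀ y ∈ T, H.Adj x y → y ∈ X := by
  have hne : Nonempty (T : Set α) := hT.coe_sort
  obtain ⟨a, b, hab⟩ : ∃ a b : (T : Set α), ¬ (H.induce (T : Set α)).Reachable a b := by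
    by_contra! hr
    exact h ⟨hr⟩
  refine ⟨T.filter fun x => ∃ hx : x ∈ T, (H.induce (T : Set α)).Reachable a ⟨x, hx⟩,
    filter_subset _ _, ⟨a, mem_filter.2 ⟨a.2, a.2, .rfl⟩⟩, ⟨b, ?_⟩, ?_⟩
  · refine mem_sdiff.2 ⟨b.2, fun hb => ?_⟩
    obtain ⟨_, hr⟩ := (mem_filter.1 hb).2
    exact hab hr
  · simp only [mem_filter]
    rintro x ⟨-, hx, hax⟩ y hy hxy
    exact ⟨hy, hy, hax.trans (show (H.induce (T : Set α)).Adj ⟨x, hx⟩ ⟨y, hy⟩ from hxy).reachable⟩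

def IsHeavy (G : SimpleGraph V) (w : Sym2 V → ℝ) (d c : ℝ) (k : ℕ) (A : Finset V) : Prop :=
  k + 1 ≤ #A ∧ d * (#A - c) < wsum G w A

section Heavy

variable {G : SimpleGraph V} {w : Sym2 V → ℝ} {d c M : ℝ} {k : ℕ} {S A B D : Finset V} {v : V}

lemma wsum_le_of_not_isHeavy (h : ¬ IsHeavy G w d c k A) (hA : k + 1 ≤ #A) :
    wsum G w A ≤ d * (#A - c) :=
  not_lt.1 fun hlt => h ⟨hA, hlt⟩

lemma IsHeavy.add_two_le_card (hM0 : 0 ≤ M) (hM : ∀ e ∈ G.edgeSet, w e ≤ M) (hkd : M * k ≤ d)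
    (hc : c ≤ (k + 1) / 2) (hA : IsHeavy G w d c k A) : k + 2 ≤ #A := by
  by_contra! hlt
  have hcard : (#A : ℝ) = k + 1 := by exact_mod_cast le_antisymm (by omega) hA.1
  have hsum := two_mul_wsum_le hM0 hM A
  have hheavy := hA.2
  rw [hcard] at hsum hheavy
  have hd : 0 ≤ d := (mul_nonneg hM0 k.cast_nonneg).trans hkd
  nlinarith [mul_le_mul_of_nonneg_right hkd (by positivity : (0 : ℝ) ≤ k + 1)]

lemma isHeavy_univ (hM0 : 0 < M) (hM : ∀ e ∈ G.edgeSet, w e ≤ M) (hkd : M * k ≤ d)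
    (hc : 0 < c) (hd : 0 < d) (hdens : d ≤ density G w univ) : IsHeavy G w d c k univ := by
  have hn : (0 : ℝ) < #(univ : Finset V) := by
    rcases Nat.eq_zero_or_pos #(univ : Finset V) with h | h
    · simp only [density, h, Nat.cast_zero, div_zero] at hdens
      linarith
    · exact_mod_cast h
  rw [density, le_div_iff₀ hn] at hdens
  have hsum := two_mul_wsum_le hM0.le hM (univ : Finset V)
  have hk : 2 * k ≤ (#(univ : Finset V) : ℝ) - 1 := by
    refine le_of_mul_le_mul_left ?_ hM0
    nlinarith
  refine ⟨by exact_mod_cast (by linarith : (k : ℝ) + 1 ≤ #(univ : Finset V)), ?_⟩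
  nlinarith

lemma lt_wdeg_of_minimal_isHeavy (hS : Minimal (IsHeavy G w d c k) S) (hcard : k + 2 ≤ #S)
    (hv : v ∈ S) : d < wdeg G w S v := by
  have hcard' : #(S.erase v) = #S - 1 := card_erase_of_mem hv
  have herase := wsum_le_of_not_isHeavy (hS.not_prop_of_lt (erase_ssubset hv)) (by omega)
  rw [hcard', Nat.cast_sub (by omega)] at herase
  have := hS.prop.2
  rw [wsum_eq_wsum_erase_add_wdeg S v] at this
  push_cast at herase
  linarith

lemma lt_card_inter_of_minimal_isHeavy (hw : ∀ e ∈ G.edgeSet, 0 ≤ w e) (hd : 0 ≤ d)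
    (hS : Minimal (IsHeavy G w d c k) S) (hAS : A ⊂ S) (hBS : B ⊂ S)
    (hA : k + 1 ≤ #A) (hB : k + 1 ≤ #B) (hAB : A ∪ B = S)
    (hadj : ∀ x ∈ A, ∀ y ∈ B, G.Adj x y → x ∈ B ∨ y ∈ A) : c < #(A ∩ B) := by
  have hwA := wsum_le_of_not_isHeavy (hS.not_prop_of_lt hAS) hA
  have hwB := wsum_le_of_not_isHeavy (hS.not_prop_of_lt hBS) hB
  have hsplit := wsum_union_le hw hadj
  have hcard : (#A : ℝ) + #B = #S + #(A ∩ B) := by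
    rw [← hAB]; exact_mod_cast (card_union_add_card_inter A B).symm
  rw [hAB] at hsplit
  have := hS.prop.2
  refine lt_of_not_ge fun hle => ?_
  nlinarith [mul_nonneg hd (sub_nonneg.2 hle)]

end Heavy

lemma card_filter_adj_add_one_le {α : Type*} [DecidableEq α] {G : SimpleGraph α}
    {S A : Finset α} {v : α} (hv : v ∈ A) (hN : S.filter (G.Adj v) ⊆ A) :
    #(S.filter (G.Adj v)) + 1 ≤ #A := by
  rw [← card_insert_of_notMem fun h => G.irrefl (mem_filter.1 h).2]
  exact card_le_card (insert_subset hv hN)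

lemma induce_sdiff_connected_of_minimal_isHeavy {G : SimpleGraph V} {w : Sym2 V → ℝ}
    {d c : ℝ} {k : ℕ} {S D : Finset V} (hw : ∀ e ∈ G.edgeSet, 0 ≤ w e) (hd : 0 ≤ d)
    (hS : Minimal (IsHeavy G w d c k) S) (hdeg : ∀ v ∈ S, k ≤ #(S.filter (G.Adj v)))
    (hDS : D ⊆ S) (hD : #D ≤ c) (hne : (S \ D).Nonempty) :
    (G.induce ((S \ D : Finset V) : Set V)).Connected := by
  by_contra hnc
  obtain ⟨X, hXT, ⟨a, ha⟩, ⟨b, hb⟩, hX⟩ := G.exists_adj_closed_of_not_connected_induce hne hnc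
  simp only [mem_sdiff] at hb hX
  have hXT' (u) (hu : u ∈ X) : u ∈ S ∧ u ∉ D := mem_sdiff.1 (hXT hu)
  have hDS' (u) (hu : u ∈ D) : u ∈ S := hDS hu
  have key := lt_card_inter_of_minimal_isHeavy (A := X ∪ D) (B := S \ X) hw hd hS ?_
    (sdiff_ssubset (hXT.trans sdiff_subset) ⟨a, ha⟩) ?_ ?_ ?_ ?_
  · have hinter : (X ∪ D) ∩ (S \ X) = D := by
      ext u
      have := hXT' u
      have := hDS' u
      simp only [mem_inter, mem_union, mem_sdiff]
      tauto
    rw [hinter] at key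
    exact absurd hD (not_le.2 key)
  · refine (ssubset_iff_of_subset (union_subset (hXT.trans sdiff_subset) hDS)).2 ⟨b, hb.1.1, ?_⟩
    simp only [mem_union]
    tauto
  · refine le_trans (by linarith [hdeg a (hXT' a ha).1])
      (card_filter_adj_add_one_le (mem_union_left _ ha) fun u hu => ?_)
    rw [mem_filter] at hu
    by_cases huD : u ∈ D
    exacts [mem_union_right _ huD, mem_union_left _ (hX a ha u ⟨hu.1, huD⟩ hu.2)]
  · refine le_trans (by linarith [hdeg b hb.1.1])
      (card_filter_adj_add_one_le (mem_sdiff.2 ⟨hb.1.1, hb.2⟩) fun u hu => ?_)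
    rw [mem_filter] at hu
    exact mem_sdiff.2 ⟨hu.1, fun huX => hb.2 (hX u huX b hb.1 hu.2.symm)⟩
  · ext u
    have := hXT' u
    have := hDS' u
    simp only [mem_union, mem_sdiff]
    tauto
  · intro x hx y hy hxy
    have := hXT' x
    have := fun hxX => hX x hxX y
    have := hDS' x
    simp only [mem_union, mem_sdiff] at hx hy ⊢
    tauto

lemma mul_floor_div_le {M d : ℝ} (hM : 0 < M) (hd : 0 ≤ d) : M * ⌊d / M⌋₊ ≤ d := by
  rw [← le_div_iff₀' hM]
  exact Nat.floor_le (div_nonneg hd hM.le)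

theorem exists_vertexConnected_lt_wdeg {G : SimpleGraph V} {w : Sym2 V → ℝ} {d M : ℝ}
    (hw : ∀ e ∈ G.edgeSet, 0 ≤ w e) (hM0 : 0 < M) (hM : ∀ e ∈ G.edgeSet, w e ≤ M)
    (hd : 0 < d) (hdens : d ≤ density G w univ) :
    ∃ S : Finset V, VertexConnected G S (⌊d / M⌋₊ / 2 + 1) ∧ ∀ v ∈ S, d < wdeg G w S v := by
  set k := ⌊d / M⌋₊
  have hkd : M * k ≤ d := mul_floor_div_le hM0 hd.le
  have hk2 : ((k / 2 : ℕ) : ℝ) ≤ k / 2 := Nat.cast_div_le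
  obtain ⟨S, hS⟩ := exists_minimal_of_wellFoundedLT (IsHeavy G w d ((k / 2 : ℕ) + 1 / 2) k)
    ⟨univ, isHeavy_univ hM0 hM hkd (by positivity) hd hdens⟩
  have hcard := hS.prop.add_two_le_card hM0.le hM hkd (by linarith)
  have hdeg (v) (hv : v ∈ S) := lt_wdeg_of_minimal_isHeavy hS hcard hv
  have hnbr (v) (hv : v ∈ S) : k ≤ #(S.filter (G.Adj v)) := by
    have := (hkd.trans_lt (hdeg v hv)).trans_le (wdeg_le_mul_card hM hv)
    exact_mod_cast (lt_of_mul_lt_mul_left this hM0.le).le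
  refine ⟨S, ⟨by omega, fun D hDS hD => ?_⟩, hdeg⟩
  refine induce_sdiff_connected_of_minimal_isHeavy hw hd.le hS hnbr hDS ?_
    (sdiff_nonempty.2 fun hSD => by have := card_le_card hSD; omega)
  have : #D ≤ k / 2 := by omega
  have : (#D : ℝ) ≤ (k / 2 : ℕ) := by exact_mod_cast this
  linarith

theorem mader_weighted_weak_general (G : SimpleGraph V) (w : Sym2 V → ℝ)
    (hE : (edgesIn G Finset.univ).Nonempty)
    (hw : ∀ e ∈ G.edgeSet, 0 < w e)
    (d : ℝ) (hd : 0 < d)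
    (hdens : density G w Finset.univ ≥ d) :
    ∃ S : Finset V,
      VertexConnected G S (⌊d / (edgesIn G Finset.univ).sup' hE w⌋₊ / 2 + 1) ∧
      ∀ v ∈ S,
        (edgesIn G Finset.univ).inf' hE w *
          ((⌊d / (edgesIn G Finset.univ).sup' hE w⌋₊ : ℕ) : ℝ) < wdeg G w S v := by
  obtain ⟨e₀, he₀⟩ := id hE
  set wmax := (edgesIn G univ).sup' hE w
  have hwmax : 0 < wmax := (hw e₀ (mem_edgesIn.1 he₀).1).trans_le (le_sup' w he₀)
  have hle_wmax (e) (he : e ∈ G.edgeSet) : w e ≤ wmax :=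
    le_sup' w (mem_edgesIn.2 ⟨he, fun _ _ => mem_univ _⟩)
  obtain ⟨S, hconn, hdeg⟩ :=
    exists_vertexConnected_lt_wdeg (fun e he => (hw e he).le) hwmax hle_wmax hd hdens
  refine ⟨S, hconn, fun v hv => lt_of_le_of_lt ?_ (hdeg v hv)⟩
  calc (edgesIn G univ).inf' hE w * ⌊d / wmax⌋₊
      ≤ wmax * ⌊d / wmax⌋₊ := by gcongr; exact (inf'_le w he₀).trans (le_sup' w he₀)
    _ ≤ d := mul_floor_div_le hwmax hd.le

/-- The straightforward application of Mader's theorem to edge-weighted graphs: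
if `d ≥ wmax` and the density of `G` is at least `d`, then `G` has an induced subgraph
`G[S]` that is `(⌊⌊d/wmax⌋/2⌋+1)`-vertex-connected and in which every vertex has weighted
degree greater than `wmin·⌊d/wmax⌋`. -/
theorem mader_weighted_weak (G : SimpleGraph V) (w : Sym2 V → ℝ)
    (hE : (edgesIn G Finset.univ).Nonempty)
    (hw : ∀ e ∈ G.edgeSet, 0 < w e)
    (d : ℝ) (hd : 0 < d)
    (hdw : (edgesIn G Finset.univ).sup' hE w ≤ d)
    (hdens : density G w Finset.univ ≥ d) :
    ∃ S : Finset V,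
      VertexConnected G S (⌊d / (edgesIn G Finset.univ).sup' hE w⌋₊ / 2 + 1) ∧
      ∀ v ∈ S,
        (edgesIn G Finset.univ).inf' hE w *
          ((⌊d / (edgesIn G Finset.univ).sup' hE w⌋₊ : ℕ) : ℝ) < wdeg G w S v :=
  mader_weighted_weak_general G w hE hw d hd hdens
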